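/- arXiv:2512.01761 — 2 statements merged into one kernel-verified Lean document; each statement's English description precedes it below -/
import Mathlib

section
/- The logistic function φ(x) = log(1 + eˣ) satisfies, for every t ∈ ℝ and all x ∈ ℝ, φ(x) ≤ φ(t) + φ'(t)(x−t) + (β(t)/2)(x−t)², where φ'(t) = eᵗ/(1+eᵗ) and β(t) = 1/4 if t = 0, and β(t) = (1/t)·(1/(1+e^{−t}) − 1/2) otherwise. -/
/-!
Let `g t x` be the right-hand side minus `log (1 + exp x)`. Since `t β(t) = σ(t) - 1/2` for the
sigmoid `σ = φ'`, one gets `∂ₓ g t x = x (β(t) - β(x))`, and `g t x` is even in `t` and in `x`.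
The curvature `β(t) = (σ(t) - 1/2) / t` is decreasing on `[0, ∞)`: on `(0, ∞)` this comes down
to `t ≤ sinh t`, and at `0` to `σ' = σ (1 - σ) ≤ 1/4`. Hence for `t, x ≥ 0` the gap `g t`
decreases on `[0, t]` and increases on `[t, ∞)`, so it is minimal at `x = t`, where it vanishes.
-/

open Real Set

lemma sigmoid_eq_exp_div (x : ℝ) : sigmoid x = exp x / (1 + exp x) := by
  rw [sigmoid_def, exp_neg]
  field_simp
  ring

lemma hasDerivAt_log_one_add_exp (x : ℝ) :
    HasDerivAt (fun y => log (1 + exp y)) (sigmoid x) x := by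
  rw [sigmoid_eq_exp_div]
  simpa using ((hasDerivAt_exp x).const_add 1).log (by positivity)

lemma log_one_add_exp_neg (x : ℝ) : log (1 + exp (-x)) = log (1 + exp x) - x := by
  have h : 1 + exp (-x) = (1 + exp x) * exp (-x) := by
    rw [add_mul, ← exp_add]
    simp [add_comm]
  rw [h, log_mul (by positivity) (exp_ne_zero _), log_exp]
  ring

lemma sigmoid_sub_half_le {v : ℝ} (hv : 0 ≤ v) : sigmoid v - 1 / 2 ≤ v / 4 := by
  have hmono : Monotone fun y => y / 4 - sigmoid y :=
    monotone_of_hasDerivAt_nonneg (f' := fun y => 1 / 4 - sigmoid y * (1 - sigmoid y))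
      (fun y => ((hasDerivAt_id y).div_const 4).sub (hasDerivAt_sigmoid y))
      (fun y => show (0 : ℝ) ≤ 1 / 4 - sigmoid y * (1 - sigmoid y) by
        nlinarith [sq_nonneg (sigmoid y - 1 / 2)])
  have := hmono hv
  simp only [sigmoid_zero] at this
  linarith

lemma mul_sigmoid_mul_one_sub_sigmoid_le {t : ℝ} (ht : 0 ≤ t) :
    t * (sigmoid t * (1 - sigmoid t)) ≤ sigmoid t - 1 / 2 := by
  have hsinh : t ≤ sinh t := self_le_sinh_iff.mpr ht
  rw [sinh_eq, exp_neg] at hsinh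
  have he := exp_pos t
  rw [sigmoid_eq_exp_div]
  field_simp
  have hinv : exp t * (exp t)⁻¹ = 1 := mul_inv_cancel₀ he.ne'
  nlinarith [mul_le_mul_of_nonneg_right hsinh he.le]

noncomputable def logisticCurvature (t : ℝ) : ℝ :=
  if t = 0 then (1 : ℝ) / 4 else (1 / t) * (1 / (1 + exp (-t)) - 1 / 2)

@[simp]
lemma logisticCurvature_zero : logisticCurvature 0 = 1 / 4 := if_pos rfl

lemma logisticCurvature_of_ne_zero {t : ℝ} (ht : t ≠ 0) :
    logisticCurvature t = (sigmoid t - 1 / 2) / t := by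
  rw [logisticCurvature, if_neg ht, sigmoid_def]
  ring

lemma mul_logisticCurvature (t : ℝ) : t * logisticCurvature t = sigmoid t - 1 / 2 := by
  rcases eq_or_ne t 0 with rfl | ht
  · norm_num
  · rw [logisticCurvature_of_ne_zero ht]
    field_simp

lemma logisticCurvature_neg (t : ℝ) : logisticCurvature (-t) = logisticCurvature t := by
  rcases eq_or_ne t 0 with rfl | ht
  · simp
  · rw [logisticCurvature_of_ne_zero (neg_ne_zero.2 ht), logisticCurvature_of_ne_zero ht,
      sigmoid_neg]
    field_simp
    ring

lemma antitoneOn_logisticCurvature_Ioi : AntitoneOn logisticCurvature (Ioi 0) := by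
  have hderiv : ∀ t ∈ Ioi (0 : ℝ), HasDerivAt (fun s => (sigmoid s - 1 / 2) / s)
      ((sigmoid t * (1 - sigmoid t) * t - (sigmoid t - 1 / 2) * 1) / t ^ 2) t :=
    fun t ht => ((hasDerivAt_sigmoid t).sub_const _).div (hasDerivAt_id t) (ne_of_gt ht)
  have hanti : AntitoneOn (fun s => (sigmoid s - 1 / 2) / s) (Ioi 0) := by
    refine antitoneOn_of_hasDerivWithinAt_nonpos (convex_Ioi 0)
      (f' := fun t => (sigmoid t * (1 - sigmoid t) * t - (sigmoid t - 1 / 2) * 1) / t ^ 2)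
      (fun t ht => (hderiv t ht).continuousAt.continuousWithinAt) (fun t ht => ?_) fun t ht => ?_
    · rw [interior_Ioi] at ht
      exact (hderiv t ht).hasDerivWithinAt
    · rw [interior_Ioi] at ht
      have := mul_sigmoid_mul_one_sub_sigmoid_le (le_of_lt ht)
      exact div_nonpos_of_nonpos_of_nonneg (by linarith) (sq_nonneg t)
  intro u hu v hv huv
  rw [logisticCurvature_of_ne_zero (ne_of_gt hu), logisticCurvature_of_ne_zero (ne_of_gt hv)]
  exact hanti hu hv huv

lemma antitoneOn_logisticCurvature : AntitoneOn logisticCurvature (Ici 0) := by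
  intro u hu v hv huv
  rcases (mem_Ici.1 hu).eq_or_lt with rfl | hu
  · rcases (mem_Ici.1 hv).eq_or_lt with rfl | hv
    · rfl
    · rw [logisticCurvature_zero, logisticCurvature_of_ne_zero (ne_of_gt hv), div_le_iff₀ hv]
      linarith [sigmoid_sub_half_le hv.le]
  · exact antitoneOn_logisticCurvature_Ioi hu (hu.trans_le huv) huv

noncomputable def logisticGap (t x : ℝ) : ℝ :=
  log (1 + exp t) + sigmoid t * (x - t) + logisticCurvature t / 2 * (x - t) ^ 2
    - log (1 + exp x)

lemma logisticGap_self (t : ℝ) : logisticGap t t = 0 := by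
  simp [logisticGap]

lemma hasDerivAt_logisticGap (t x : ℝ) :
    HasDerivAt (logisticGap t) (x * (logisticCurvature t - logisticCurvature x)) x := by
  have hlin := (((hasDerivAt_id x).sub_const t).const_mul (sigmoid t)).const_add
    (log (1 + exp t))
  have hquad := (((hasDerivAt_id x).sub_const t).pow 2).const_mul (logisticCurvature t / 2)
  refine ((hlin.add hquad).sub (hasDerivAt_log_one_add_exp x)).congr_deriv ?_
  simp only [id]
  linear_combination mul_logisticCurvature x - mul_logisticCurvature t

lemma logisticGap_neg_right (t x : ℝ) : logisticGap t (-x) = logisticGap t x := by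
  simp only [logisticGap, log_one_add_exp_neg]
  linear_combination (2 * x) * mul_logisticCurvature t

lemma logisticGap_neg_left (t x : ℝ) : logisticGap (-t) x = logisticGap t x := by
  simp only [logisticGap, log_one_add_exp_neg, sigmoid_neg, logisticCurvature_neg]
  linear_combination (2 * x) * mul_logisticCurvature t

lemma logisticGap_nonneg_of_nonneg {t x : ℝ} (ht : 0 ≤ t) (hx : 0 ≤ x) :
    0 ≤ logisticGap t x := by
  have hderiv := hasDerivAt_logisticGap t
  have hcont : ∀ s : Set ℝ, ContinuousOn (logisticGap t) s :=
    fun s y _ => (hderiv y).continuousAt.continuousWithinAt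
  rw [← logisticGap_self t]
  rcases le_total x t with hxt | htx
  · refine antitoneOn_of_hasDerivWithinAt_nonpos (convex_Icc 0 t) (hcont _)
      (fun y _ => (hderiv y).hasDerivWithinAt) (fun y hy => ?_) ⟨hx, hxt⟩ ⟨ht, le_rfl⟩ hxt
    rw [interior_Icc] at hy
    exact mul_nonpos_of_nonneg_of_nonpos hy.1.le
      (sub_nonpos.2 (antitoneOn_logisticCurvature hy.1.le ht hy.2.le))
  · refine monotoneOn_of_hasDerivWithinAt_nonneg (convex_Ici t) (hcont _)
      (fun y _ => (hderiv y).hasDerivWithinAt) (fun y hy => ?_) self_mem_Ici htx htx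
    rw [interior_Ici] at hy
    exact mul_nonneg (ht.trans hy.le)
      (sub_nonneg.2 (antitoneOn_logisticCurvature ht (ht.trans hy.le) hy.le))

lemma logisticGap_nonneg (t x : ℝ) : 0 ≤ logisticGap t x := by
  have habs : logisticGap |t| |x| = logisticGap t x := by
    rcases abs_choice t with ht | ht <;> rcases abs_choice x with hx | hx <;>
      simp only [ht, hx, logisticGap_neg_left, logisticGap_neg_right]
  exact habs ▸ logisticGap_nonneg_of_nonneg (abs_nonneg t) (abs_nonneg x)

theorem stmt5 :
    ∀ t x : ℝ,
      Real.log (1 + Real.exp x) ≤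
        Real.log (1 + Real.exp t) + (Real.exp t / (1 + Real.exp t)) * (x - t)
          + (if t = 0 then (1 : ℝ) / 4
             else (1 / t) * (1 / (1 + Real.exp (-t)) - 1 / 2)) / 2 * (x - t) ^ 2 := by
  intro t x
  have hgap := logisticGap_nonneg t x
  rw [logisticGap, sigmoid_eq_exp_div, sub_nonneg] at hgap
  exact hgap
end

section
/- The Cauchy penalty φ(x) = log(1 + x²/δ²), with δ > 0, satisfies for every t ∈ ℝ and all x ∈ ℝ: φ(x) ≤ φ(t) + φ'(t)(x−t) + (β(t)/2)(x−t)², where φ'(t) = 2t/(t² + δ²) and β(t) = 2/(t² + δ²). -/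
theorem stmt6 (δ : ℝ) (hδ : 0 < δ) :
    ∀ t x : ℝ,
      Real.log (1 + x ^ 2 / δ ^ 2) ≤
        Real.log (1 + t ^ 2 / δ ^ 2) + (2 * t / (t ^ 2 + δ ^ 2)) * (x - t)
          + (2 / (t ^ 2 + δ ^ 2)) / 2 * (x - t) ^ 2 := by
  intro t x
  have hδ2 : (0:ℝ) < δ ^ 2 := by positivity
  have hb : (0:ℝ) < t ^ 2 + δ ^ 2 := by positivity
  have ha : (0:ℝ) < x ^ 2 + δ ^ 2 := by positivity
  have hx : 1 + x ^ 2 / δ ^ 2 = (x ^ 2 + δ ^ 2) / δ ^ 2 := by field_simp; ring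
  have ht : 1 + t ^ 2 / δ ^ 2 = (t ^ 2 + δ ^ 2) / δ ^ 2 := by field_simp; ring
  rw [hx, ht, Real.log_div (ne_of_gt ha) (ne_of_gt hδ2),
    Real.log_div (ne_of_gt hb) (ne_of_gt hδ2)]
  have key : Real.log ((x ^ 2 + δ ^ 2) / (t ^ 2 + δ ^ 2)) ≤
      (x ^ 2 + δ ^ 2) / (t ^ 2 + δ ^ 2) - 1 :=
    Real.log_le_sub_one_of_pos (by positivity)
  rw [Real.log_div (ne_of_gt ha) (ne_of_gt hb)] at key
  have h2 : (x ^ 2 + δ ^ 2) / (t ^ 2 + δ ^ 2) - 1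
      = (2 * t / (t ^ 2 + δ ^ 2)) * (x - t) + (2 / (t ^ 2 + δ ^ 2)) / 2 * (x - t) ^ 2 := by
    field_simp
    ring
  linarith [key, h2.le, h2.ge]
end
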